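/- Assume F is dyadic and let B = (b_{ij}) ∈ ℋ_n(𝔬)^{nd} be a reduced form of GK-type (a, σ). Then: (1) if n = deg B is odd and i₀ ∈ 𝒫⁰(σ), then ord(b_{i₀,i₀}) ≡ ord(det B) (mod 2); (2) if n = deg B is even and ξ_B = 0, then for every integer k there exists i₀ ∈ 𝒫⁰(σ) with ord(b_{i₀,i₀}) ≡ k (mod 2). -/

import Mathlib

open Matrix
open scoped Classical

noncomputable section

/-- The data of a normalized additive discrete valuation `ord` on a field `F`
(`ord ϖ = 1` for a prime element `ϖ`, `ord 0 = ∞`), together with the axioms making `F`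
a non-archimedean local field: `ord` is a surjective discrete valuation, the residue
field is finite, and `F` is complete. -/
structure LocalFieldData (F : Type*) [Field F] where
  ord : F → WithTop ℤ
  ord_zero : ord 0 = ⊤
  ord_eq_top : ∀ x : F, ord x = ⊤ → x = 0
  ord_one : ord 1 = 0
  ord_neg : ∀ x : F, ord (-x) = ord x
  ord_mul : ∀ x y : F, ord (x * y) = ord x + ord y
  ord_add : ∀ x y : F, min (ord x) (ord y) ≤ ord (x + y)
  ord_surj : ∀ m : ℤ, ∃ x : F, ord x = (m : WithTop ℤ)
  residue_finite : ∃ S : Finset F, ∀ x : F, 0 ≤ ord x → ∃ s ∈ S, 0 < ord (x - s)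
  complete : ∀ f : ℕ → F,
    (∀ N : ℤ, ∃ M : ℕ, ∀ m ≥ M, ∀ k ≥ M, (N : WithTop ℤ) ≤ ord (f m - f k)) →
    ∃ L : F, ∀ N : ℤ, ∃ M : ℕ, ∀ m ≥ M, (N : WithTop ℤ) ≤ ord (f m - L)

/-- The (non-strict) lexicographic order on sequences: `y ⪯ z`. -/
def lexLE {n : ℕ} (y z : Fin n → ℤ) : Prop :=
  y = z ∨ ∃ j : Fin n, y j < z j ∧ ∀ i : Fin n, i < j → y i = z i

/-- `d` is a square in `F`. -/
def IsSq {F : Type*} [Field F] (d : F) : Prop := ∃ y : F, y ^ 2 = d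

/-- `D_B = (-4)^{⌊n/2⌋} · det B`. -/
def DB {F : Type*} [Field F] {n : ℕ} (B : Matrix (Fin n) (Fin n) F) : F :=
  (-4 : F) ^ (n / 2) * B.det

/-- The upper-left `m × m` submatrix `B^{(m)}` (junk entries `0` out of range). -/
def upperLeft {α : Type*} [Zero α] {n : ℕ} (B : Matrix (Fin n) (Fin n) α) (m : ℕ) :
    Matrix (Fin m) (Fin m) α :=
  Matrix.of fun i j =>
    if h : (i : ℕ) < n ∧ (j : ℕ) < n then B ⟨(i : ℕ), h.1⟩ ⟨(j : ℕ), h.2⟩ else 0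

/-- The first `m` entries of a sequence (junk value `0` out of range). -/
def restrictSeq {n : ℕ} (a : Fin n → ℤ) (m : ℕ) : Fin m → ℤ :=
  fun i => if h : (i : ℕ) < n then a ⟨(i : ℕ), h⟩ else 0

/-- An `a`-admissible involution `σ` (Definition 1.6). -/
def Admissible {n : ℕ} (a : Fin n → ℤ) (σ : Equiv.Perm (Fin n)) : Prop :=
  (∀ i, σ (σ i) = i) ∧
  -- (i) 𝒫⁰ has at most two elements
  (∀ i j k : Fin n, σ i = i → σ j = j → σ k = k → i = j ∨ i = k ∨ j = k) ∧
  -- (i) two distinct fixed points have different parities of `a`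
  (∀ i j : Fin n, σ i = i → σ j = j → i ≠ j → ¬ (a i % 2 = a j % 2)) ∧
  -- (i) a fixed point is maximal in its block and maximal among `𝒫⁰ ∪ 𝒫⁺` of the same parity
  (∀ i : Fin n, σ i = i →
    (∀ j : Fin n, a j = a i → j ≤ i) ∧
    ∀ j : Fin n, (σ j = j ∨ a (σ j) < a j) → a j % 2 = a i % 2 → j ≤ i) ∧
  -- (ii) at most one element of `I_s ∩ 𝒫⁻`
  (∀ i j : Fin n, a i = a j → a i < a (σ i) → a j < a (σ j) → i = j) ∧
  -- (ii) an element of `I_s ∩ 𝒫⁻` is maximal in `I_s` and is paired with the minimum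
  (∀ i : Fin n, a i < a (σ i) →
    (∀ j : Fin n, a j = a i → j ≤ i) ∧
    IsLeast {j : Fin n | a (σ j) < a j ∧ i < j ∧ a j % 2 = a i % 2} (σ i)) ∧
  -- (iii) at most one element of `I_s ∩ 𝒫⁺`
  (∀ i j : Fin n, a i = a j → a (σ i) < a i → a (σ j) < a j → i = j) ∧
  -- (iii) an element of `I_s ∩ 𝒫⁺` is minimal in `I_s` and is paired with the maximum
  (∀ i : Fin n, a (σ i) < a i →
    (∀ j : Fin n, a j = a i → i ≤ j) ∧
    IsGreatest {j : Fin n | a j < a (σ j) ∧ j < i ∧ a j % 2 = a i % 2} (σ i)) ∧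
  -- (iv)
  (∀ i : Fin n, a i = a (σ i) → (((i : ℕ) : ℤ) - ((σ i : Fin n) : ℕ)).natAbs ≤ 1)

/-- The combinatorial data of a decomposition of an `n × n` matrix into `r` consecutive
diagonal blocks, each of size `1` or `2`, the `s`-th block being scaled by `2^(k s)`:
`c` is the sequence of cumulative block boundaries. -/
structure BlockData (n : ℕ) where
  r : ℕ
  c : ℕ → ℕ
  k : ℕ → ℕ
  c_zero : c 0 = 0
  c_last : c r = n
  c_lt : ∀ s < r, c s < c (s + 1)
  size_le : ∀ s < r, c (s + 1) ≤ c s + 2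

namespace BlockData

variable {n : ℕ} (bd : BlockData n)

/-- `i` belongs to the `s`-th block. -/
def InBlock (s : ℕ) (i : Fin n) : Prop := bd.c s ≤ (i : ℕ) ∧ (i : ℕ) < bd.c (s + 1)

/-- The size (`deg C_s`) of the `s`-th block. -/
def size (s : ℕ) : ℕ := bd.c (s + 1) - bd.c s

end BlockData

/-- The description of the maximal constant blocks of a non-decreasing sequence `a`:
`Ns` is the sequence of cumulative block lengths `n_s^*` and `ms` the sequence of values. -/
def BlocksOf {n : ℕ} (a : Fin n → ℤ) (r : ℕ) (Ns : ℕ → ℕ) (ms : ℕ → ℤ) : Prop :=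
  Ns 0 = 0 ∧ Ns r = n ∧ (∀ s < r, Ns s < Ns (s + 1)) ∧
  (∀ s < r, ∀ i : Fin n, Ns s ≤ (i : ℕ) → (i : ℕ) < Ns (s + 1) → a i = ms s) ∧
  (∀ s, s + 1 < r → ms s < ms (s + 1))

/-- `(n₁,…,n_r; m₁,…,m_r; ζ₁,…,ζ_r)` (encoded via the cumulative sums `Ns (s+1) = n_{s+1}^*`,
`ms s = m_{s+1}`, `zs s = ζ_{s+1}`) is an EGK datum of length `n` (Definition 4.2). -/
def IsEGKDatum (n r : ℕ) (Ns : ℕ → ℕ) (ms zs : ℕ → ℤ) : Prop :=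
  Ns 0 = 0 ∧ Ns r = n ∧ (∀ s < r, Ns s < Ns (s + 1)) ∧
  (∀ s < r, 0 ≤ ms s) ∧ (∀ s, s + 1 < r → ms s < ms (s + 1)) ∧
  (∀ s < r, zs s = 0 ∨ zs s = 1 ∨ zs s = -1) ∧
  -- (E2)
  (∀ s < r, Even (Ns (s + 1)) →
    (zs s ≠ 0 ↔ Even (∑ u ∈ Finset.range (s + 1), ms u * ((Ns (u + 1) : ℤ) - (Ns u : ℤ))))) ∧
  -- (E3)
  (∀ s < r, ¬ Even (Ns (s + 1)) →
    zs s ≠ 0 ∧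
    ((∀ i < s, Even (Ns (i + 1))) →
      zs s = ∏ u ∈ Finset.range s, zs u ^ (ms u + ms (u + 1)).toNat) ∧
    (∀ t < s, ¬ Even (Ns (t + 1)) → (∀ i, t < i → i < s → Even (Ns (i + 1))) →
      Even ((∑ u ∈ Finset.range s, ms u * ((Ns (u + 1) : ℤ) - (Ns u : ℤ))) +
        ms s * ((Ns (s + 1) : ℤ) - (Ns s : ℤ) - 1)) →
      zs s = zs t * ∏ u ∈ Finset.Ico (t + 1) s, zs u ^ (ms u + ms (u + 1)).toNat))

/-- `(a₁,…,a_n; ε₁,…,ε_n)` is a naive EGK datum of length `n` (Definition 4.1);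
the index `i : Fin n` corresponds to the (1-based) index `(i : ℕ) + 1` of the paper. -/
def IsNaiveEGK (n : ℕ) (a ε : Fin n → ℤ) : Prop :=
  (∀ i, 0 ≤ a i) ∧ (∀ i j : Fin n, i ≤ j → a i ≤ a j) ∧
  (∀ i, ε i = 0 ∨ ε i = 1 ∨ ε i = -1) ∧
  -- (N2)
  (∀ i : Fin n, Even ((i : ℕ) + 1) →
    (ε i ≠ 0 ↔ Even (∑ j ∈ Finset.univ.filter (fun j : Fin n => j ≤ i), a j))) ∧
  -- (N3)
  (∀ i : Fin n, ¬ Even ((i : ℕ) + 1) → ε i ≠ 0) ∧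
  -- (N4)
  (∀ h : 0 < n, ε ⟨0, h⟩ = 1) ∧
  -- (N5)
  (∀ i : Fin n, 2 ≤ (i : ℕ) → ¬ Even ((i : ℕ) + 1) →
    Even (∑ j ∈ Finset.univ.filter (fun j : Fin n => j < i), a j) →
    ∀ (h2 : (i : ℕ) - 2 < n) (h1 : (i : ℕ) - 1 < n),
      ε i = ε ⟨(i : ℕ) - 2, h2⟩ * ε ⟨(i : ℕ) - 1, h1⟩ ^ (a i + a ⟨(i : ℕ) - 1, h1⟩).toNat)

/-- `Υ(a₁,…,a_n; ε₁,…,ε_n) = (n₁,…,n_r; m₁,…,m_r; ζ₁,…,ζ_r)` (encoded via cumulative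
block lengths `Ns`). -/
def UpsilonRel (n : ℕ) (a ε : Fin n → ℤ) (r : ℕ) (Ns : ℕ → ℕ) (ms zs : ℕ → ℤ) : Prop :=
  BlocksOf a r Ns ms ∧
  (∀ s < r, ∀ h : Ns (s + 1) - 1 < n, zs s = ε ⟨Ns (s + 1) - 1, h⟩)

/-- The Hilbert symbol `⟨a, b⟩ ∈ {±1}`. -/
def hilbertSym {F : Type*} [Field F] (a b : F) : ℤ :=
  if ∃ x y : F, a * x ^ 2 + b * y ^ 2 = 1 then 1 else -1

/-- `e` is the Clifford invariant `η_B` of `B` (Definition 1.4), computed via a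
`GL_n(F)`-diagonalization of `B`. -/
def IsCliffordInv {F : Type*} [Field F] {n : ℕ} (B : Matrix (Fin n) (Fin n) F) (e : ℤ) :
    Prop :=
  ∃ (P : Matrix (Fin n) (Fin n) F) (d : Fin n → F),
    IsUnit P.det ∧ Pᵀ * B * P = Matrix.diagonal d ∧
    e = hilbertSym (-1) (-1 : F) ^ ((n + 1) / 4) * hilbertSym (-1) B.det ^ ((n - 1) / 2) *
      ∏ j : Fin n, ∏ i ∈ Finset.univ.filter (fun i : Fin n => i < j), hilbertSym (d i) (d j)

namespace LocalFieldData

variable {F : Type*} [Field F] (v : LocalFieldData F)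

/-- `x` lies in the ring of integers `𝔬`. -/
def Integer (x : F) : Prop := 0 ≤ v.ord x

/-- `ord` as an integer-valued function (junk value `0` at `x = 0`). -/
def ordZ (x : F) : ℤ := (v.ord x).untopD 0

/-- `U ∈ GL_n(𝔬)`. -/
def IsUnimodular {n : ℕ} (U : Matrix (Fin n) (Fin n) F) : Prop :=
  (∀ i j, v.Integer (U i j)) ∧ v.ord U.det = 0

/-- `B` and `B'` are `GL_n(𝔬)`-equivalent. -/
def Equivalent {n : ℕ} (B B' : Matrix (Fin n) (Fin n) F) : Prop :=
  ∃ U : Matrix (Fin n) (Fin n) F, v.IsUnimodular U ∧ B' = Uᵀ * B * U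

/-- `B ∈ ℋ_n(𝔬)`: a half-integral symmetric matrix. -/
def IsHalfIntegral {n : ℕ} (B : Matrix (Fin n) (Fin n) F) : Prop :=
  B.IsSymm ∧ (∀ i, v.Integer (B i i)) ∧ ∀ i j, v.Integer (2 * B i j)

/-- `B ∈ 𝓜(a)`: `ord(b_ii) ≥ a_i` and `ord(2 b_ij) ≥ (a_i + a_j)/2`. -/
def MemM {n : ℕ} (B : Matrix (Fin n) (Fin n) F) (a : Fin n → ℤ) : Prop :=
  (∀ i, (a i : WithTop ℤ) ≤ v.ord (B i i)) ∧
  ∀ i j, ((a i + a j : ℤ) : WithTop ℤ) ≤ v.ord (2 * B i j) + v.ord (2 * B i j)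

/-- `a ∈ S(B)`. -/
def MemS {n : ℕ} (B : Matrix (Fin n) (Fin n) F) (a : Fin n → ℤ) : Prop :=
  (∀ i, 0 ≤ a i) ∧ (∀ i j : Fin n, i ≤ j → a i ≤ a j) ∧ v.MemM B a

/-- `a ∈ 𝐒({B})`. -/
def MemSS {n : ℕ} (B : Matrix (Fin n) (Fin n) F) (a : Fin n → ℤ) : Prop :=
  ∃ U : Matrix (Fin n) (Fin n) F, v.IsUnimodular U ∧ v.MemS (Uᵀ * B * U) a

/-- `a` is the Gross–Keating invariant of `B`: the greatest element of `𝐒({B})` in the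
lexicographic order. -/
def IsGK {n : ℕ} (B : Matrix (Fin n) (Fin n) F) (a : Fin n → ℤ) : Prop :=
  v.MemSS B a ∧ ∀ b : Fin n → ℤ, v.MemSS B b → lexLE b a

/-- `B` is optimal: `GK(B) ∈ S(B)`. -/
def IsOptimal {n : ℕ} (B : Matrix (Fin n) (Fin n) F) : Prop :=
  ∃ a : Fin n → ℤ, v.IsGK B a ∧ v.MemS B a

/-- Membership condition for the group `G_a`:
`ord(g_ij) ≥ (a_j - a_i)/2` whenever `a_i < a_j`. -/
def GCond {n : ℕ} (a : Fin n → ℤ) (g : Matrix (Fin n) (Fin n) F) : Prop :=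
  ∀ i j : Fin n, a i < a j → ((a j - a i : ℤ) : WithTop ℤ) ≤ v.ord (g i j) + v.ord (g i j)

/-- `F(√d)/F` is a quadratic unramified extension, characterized via local class field
theory: `d` is not a square, and every unit of `𝔬` is a norm from `F(√d)`. -/
def UnramifiedQuadratic (d : F) : Prop :=
  ¬ IsSq d ∧ ∀ x : F, v.ord x = 0 → ∃ a b : F, x = a ^ 2 - d * b ^ 2

/-- `ξ_B ∈ {1, -1, 0}` according as `D_B` is a square, `F(√D_B)/F` is unramified quadratic,
or `F(√D_B)/F` is ramified. -/
def xi {n : ℕ} (B : Matrix (Fin n) (Fin n) F) : ℤ :=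
  if IsSq (DB B) then 1 else if v.UnramifiedQuadratic (DB B) then -1 else 0

/-- `ord 𝔇` for the quadratic extension `F(√d)/F`: the minimal valuation of the
discriminant `4 y² d` of an integral generator `x + y √d` of `F[√d]`. -/
def discOrd (d : F) : ℤ :=
  sInf {m : ℤ | ∃ x y : F, v.Integer (2 * x) ∧ v.Integer (x ^ 2 - d * y ^ 2) ∧
    v.ord (4 * y ^ 2 * d) = (m : WithTop ℤ)}

/-- `Δ(B)` (Definition 1.3). -/
def Delta {n : ℕ} (B : Matrix (Fin n) (Fin n) F) : ℤ :=
  if Even n then v.ordZ (DB B) - v.discOrd (DB B) + 1 - (v.xi B) ^ 2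
  else v.ordZ (DB B)

/-- `B` is a reduced form of GK-type `(a, σ)` (Definition 1.8). -/
def IsReducedForm {n : ℕ} (B : Matrix (Fin n) (Fin n) F) (a : Fin n → ℤ)
    (σ : Equiv.Perm (Fin n)) : Prop :=
  v.MemM B a ∧
  -- (1)
  (∀ i : Fin n, σ i ≠ i →
    v.ord (2 * B i (σ i)) + v.ord (2 * B i (σ i)) = ((a i + a (σ i) : ℤ) : WithTop ℤ)) ∧
  (∀ i : Fin n, a i < a (σ i) → v.ord (B i i) = (a i : WithTop ℤ)) ∧
  -- (2)
  (∀ i : Fin n, σ i = i → v.ord (B i i) = (a i : WithTop ℤ)) ∧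
  -- (3)
  (∀ i j : Fin n, j ≠ i → j ≠ σ i →
    ((a i + a j : ℤ) : WithTop ℤ) < v.ord (2 * B i j) + v.ord (2 * B i j))

/-- The `s`-th block of `B` is `2^{k_s} C_s` with `C_s` a unimodular diagonal matrix. -/
def DiagBlock {n : ℕ} (B : Matrix (Fin n) (Fin n) F) (bd : BlockData n) (s : ℕ) : Prop :=
  ∀ i j : Fin n, bd.InBlock s i → bd.InBlock s j →
    (i = j → v.ord (B i i) = ((bd.k s : ℤ) : WithTop ℤ)) ∧ (i ≠ j → B i j = 0)

/-- The `s`-th block of `B` is `2^{k_s} C_s` with `C_s ∈ ½(S₂(𝔬)_e ∩ GL₂(𝔬))`. -/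
def EvenBlock {n : ℕ} (B : Matrix (Fin n) (Fin n) F) (bd : BlockData n) (s : ℕ) : Prop :=
  bd.c (s + 1) = bd.c s + 2 ∧
  ∀ i j : Fin n, bd.InBlock s i → bd.InBlock s j →
    (i = j → ((bd.k s : ℤ) : WithTop ℤ) ≤ v.ord (B i i)) ∧
    (i ≠ j → v.ord (2 * B i j) = ((bd.k s : ℤ) : WithTop ℤ))

/-- `B = 2^{k₁}C₁ ⊥ ⋯ ⊥ 2^{k_r}C_r` is a pre-optimal form (Definition 2.2), with the
block decomposition recorded by `bd`. -/
def IsPreOptimal {n : ℕ} (B : Matrix (Fin n) (Fin n) F) (bd : BlockData n) : Prop :=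
  v.IsHalfIntegral B ∧ B.det ≠ 0 ∧
  (∀ s t : ℕ, s < bd.r → t < bd.r → s ≠ t →
    ∀ i j : Fin n, bd.InBlock s i → bd.InBlock t j → B i j = 0) ∧
  (∀ s < bd.r, v.DiagBlock B bd s ∨ v.EvenBlock B bd s) ∧
  -- (PO1): `Σ_{j ∈ 𝒟_m} deg C_j ≤ 2`
  (∀ s t : ℕ, s < bd.r → t < bd.r → s ≠ t → v.DiagBlock B bd s → v.DiagBlock B bd t →
    bd.k s = bd.k t → bd.size s + bd.size t ≤ 2) ∧
  (∀ s t u : ℕ, s < bd.r → t < bd.r → u < bd.r → s ≠ t → s ≠ u → t ≠ u →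
    v.DiagBlock B bd s → v.DiagBlock B bd t → v.DiagBlock B bd u →
    bd.k s = bd.k t → bd.k t = bd.k u → False) ∧
  -- (PO1): `ℰ_m` is a set of consecutive integers
  (∀ s t u : ℕ, s ≤ t → t ≤ u → u < bd.r → v.EvenBlock B bd s → v.EvenBlock B bd u →
    bd.k s = bd.k u → v.EvenBlock B bd t ∧ bd.k t = bd.k s) ∧
  -- (PO2)
  (∀ s t : ℕ, s < t → t < bd.r →
    (v.DiagBlock B bd s → v.DiagBlock B bd t → bd.k s ≤ bd.k t) ∧
    (v.EvenBlock B bd s → v.EvenBlock B bd t → bd.k s ≤ bd.k t) ∧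
    (v.DiagBlock B bd s → v.EvenBlock B bd t → bd.k s + 1 ≤ bd.k t) ∧
    (v.EvenBlock B bd s → v.DiagBlock B bd t → bd.k s ≤ bd.k t + 1)) ∧
  -- (PO3)
  (∀ s < bd.r, v.DiagBlock B bd s → bd.size s = 2 →
    1 ≤ s ∧
    ((Even (bd.c (s + 1)) ∧ v.xi (upperLeft B (bd.c s)) = 0 ∧
        v.xi (upperLeft B (bd.c (s + 1))) = 0) ∨
      (Odd (bd.c s) ∧ Even (v.ordZ (Matrix.det (upperLeft B (bd.c s))) + (bd.k s : ℤ))))) ∧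
  -- (PO4)
  (∀ s < bd.r, 1 ≤ s → bd.k (s - 1) = bd.k s + 1 → v.DiagBlock B bd s →
    v.EvenBlock B bd (s - 1) →
    bd.size s = 2 ∨
      (bd.size s = 1 ∧
        ((Even (bd.c (s + 1)) ∧ Even (v.ordZ (Matrix.det (upperLeft B (bd.c (s + 1)))))) ∨
          (Odd (bd.c (s + 1)) ∧ v.xi (upperLeft B (bd.c s)) = 0)))) ∧
  -- (PO5)
  (∀ s : ℕ, s + 1 < bd.r → v.DiagBlock B bd s → v.EvenBlock B bd (s + 1) →
    bd.k (s + 1) = bd.k s + 1 →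
    bd.size s = 1 ∧
      ((Even (bd.c (s + 1)) ∧ Odd (v.ordZ (Matrix.det (upperLeft B (bd.c (s + 1)))))) ∨
        (Odd (bd.c (s + 1)) ∧ (1 ≤ s → v.xi (upperLeft B (bd.c s)) ≠ 0)))) ∧
  -- (PO6)
  (∀ s : ℕ, s + 1 < bd.r → Even (bd.c (s + 1)) → v.DiagBlock B bd s →
    v.DiagBlock B bd (s + 1) → bd.k (s + 1) = bd.k s + 1 →
    v.xi (upperLeft B (bd.c (s + 1))) = 0)

/-- The statement of Theorem 3.1 at the `s`-th block of a pre-optimal form `B`, for the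
(0-indexed) sequence `aN` of entries of `GK(B)`. -/
def GKFormulaAt {n : ℕ} (B : Matrix (Fin n) (Fin n) F) (bd : BlockData n)
    (aN : ℕ → ℤ) (s : ℕ) : Prop :=
  -- (1)
  (v.EvenBlock B bd s →
    aN (bd.c (s + 1) - 2) = (bd.k s : ℤ) ∧ aN (bd.c (s + 1) - 1) = (bd.k s : ℤ)) ∧
  -- (2)
  (v.DiagBlock B bd s → bd.size s = 1 →
    -- (2.1)
    (Odd (bd.c (s + 1)) →
      (Odd (v.ordZ (Matrix.det (upperLeft B (bd.c s)))) →
        aN (bd.c (s + 1) - 1) = (bd.k s : ℤ) + 2) ∧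
      (Even (v.ordZ (Matrix.det (upperLeft B (bd.c s)))) → v.xi (upperLeft B (bd.c s)) = 0 →
        aN (bd.c (s + 1) - 1) = (bd.k s : ℤ) + 1) ∧
      (v.xi (upperLeft B (bd.c s)) ≠ 0 → aN (bd.c (s + 1) - 1) = (bd.k s : ℤ))) ∧
    -- (2.2)
    (Even (bd.c (s + 1)) →
      (Odd (v.ordZ (Matrix.det (upperLeft B (bd.c (s + 1))))) →
        aN (bd.c (s + 1) - 1) = (bd.k s : ℤ)) ∧
      (Even (v.ordZ (Matrix.det (upperLeft B (bd.c (s + 1))))) →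
        v.xi (upperLeft B (bd.c (s + 1))) = 0 →
        aN (bd.c (s + 1) - 1) = (bd.k s : ℤ) + 1) ∧
      (v.xi (upperLeft B (bd.c (s + 1))) ≠ 0 → aN (bd.c (s + 1) - 1) = (bd.k s : ℤ) + 2))) ∧
  -- (3)
  (v.DiagBlock B bd s → bd.size s = 2 →
    aN (bd.c (s + 1) - 2) = (bd.k s : ℤ) + 1 ∧ aN (bd.c (s + 1) - 1) = (bd.k s : ℤ) + 1)

/-- `(n₁,…,n_r; m₁,…,m_r; ζ₁,…,ζ_r)` (encoded via cumulative block lengths `Ns`) is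
the extended Gross–Keating datum `EGK(B)` of `B` (Definition 1.5), computed from an
optimal form `B'` equivalent to `B`. -/
def IsEGK {n : ℕ} (B : Matrix (Fin n) (Fin n) F) (r : ℕ) (Ns : ℕ → ℕ) (ms zs : ℕ → ℤ) :
    Prop :=
  ∃ B' : Matrix (Fin n) (Fin n) F, v.Equivalent B B' ∧
    ∃ a : Fin n → ℤ, v.IsGK B' a ∧ v.MemS B' a ∧ BlocksOf a r Ns ms ∧
      ∀ s < r, (Even (Ns (s + 1)) → zs s = v.xi (upperLeft B' (Ns (s + 1)))) ∧
        (¬ Even (Ns (s + 1)) → IsCliffordInv (upperLeft B' (Ns (s + 1))) (zs s))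

end LocalFieldData



/-!
Eliminating a pair `{p, σ p}` of `B` by a Schur complement leaves a matrix of the same shape on
the remaining indices: its `2 × 2` block `A` has `-4 det A = (2 b_{p,σ p})² u` with `u ≡ 1 mod 4`,
and since `ord 2 ≥ 1` the correction terms `B_{k,P} A⁻¹ B_{P,l}` are too small to disturb any of
the defining conditions. Iterating, `(-4)^⌊n/2⌋ det B = m² u d` with `u ≡ 1 mod 4`, where `d` is
the diagonal entry left at the fixed point of `σ` (and `d = 1` if there is none).

For odd `n`, `σ` has exactly one fixed point `i₀` and `ord d = a_{i₀} = ord b_{i₀ i₀}`, which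
gives (1). For even `n`, `σ` has either two fixed points, whose `a`-values have different
parities, or none; in the latter case `D_B` is a square times `u ≡ 1 mod 4`, and then every unit
is a norm from `F(√D_B)`: take a square root modulo `𝔭` (squaring is bijective on the finite
residue field of characteristic `2`) and lift it by a contraction argument. So `ξ_B ≠ 0`.
-/

lemma WithTop.coe_add_one_le_of_lt {m : ℤ} {z : WithTop ℤ} (h : (m : WithTop ℤ) < z) :
    ((m + 1 : ℤ) : WithTop ℤ) ≤ z := by
  induction z using WithTop.recTopCoe with
  | top => exact le_top
  | coe k => norm_cast at h ⊢

theorem AddValuation.map_lt_sub {R Γ₀ : Type*} [Ring R] [LinearOrderedAddCommMonoidWithTop Γ₀]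
    (w : AddValuation R Γ₀) {x y : R} {g : Γ₀} (hx : g < w x) (hy : g < w y) :
    g < w (x - y) := by
  rw [sub_eq_add_neg]
  exact w.map_lt_add hx (by rwa [w.map_neg])

theorem AddValuation.coe_le_map_mul {R : Type*} [Ring R] (w : AddValuation R (WithTop ℤ))
    {x y : R} {c₁ c₂ c : ℤ} (h₁ : (c₁ : WithTop ℤ) ≤ w x) (h₂ : (c₂ : WithTop ℤ) ≤ w y)
    (h : c ≤ c₁ + c₂) : (c : WithTop ℤ) ≤ w (x * y) := by
  rw [w.map_mul]
  exact (WithTop.coe_le_coe.2 h).trans (WithTop.coe_add c₁ c₂ ▸ add_le_add h₁ h₂)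

namespace Equiv.Perm

variable {α : Type*} [Fintype α] [DecidableEq α] {σ : Perm α}

lemma card_compl_support_modEq_two (hσ : Function.Involutive σ) :
    σ.supportᶜ.card ≡ Fintype.card α [MOD 2] :=
  card_compl_support_modEq (p := 2) (n := 1) (Equiv.ext hσ)

lemma exists_fixed_ne_of_even_card (hσ : Function.Involutive σ) (hn : Even (Fintype.card α))
    {i : α} (hi : σ i = i) : ∃ j, σ j = j ∧ j ≠ i := by
  have hmem : i ∈ σ.supportᶜ := by simp [hi]
  have hcard : 1 < σ.supportᶜ.card := by
    have h1 := Finset.card_pos.2 ⟨i, hmem⟩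
    have h2 := card_compl_support_modEq_two hσ
    rw [Nat.ModEq] at h2
    rcases hn with ⟨r, hr⟩
    omega
  obtain ⟨j, hj, hji⟩ := Finset.exists_mem_ne hcard i
  exact ⟨j, by simpa using hj, hji⟩

lemma eq_of_fixed_of_odd_card (hσ : Function.Involutive σ)
    (h3 : ∀ i j k, σ i = i → σ j = j → σ k = k → i = j ∨ i = k ∨ j = k)
    (hn : Odd (Fintype.card α)) {i j : α} (hi : σ i = i) (hj : σ j = j) : i = j := by
  by_contra hij
  have hfix : σ.supportᶜ = {i, j} := by
    ext k
    simp only [Finset.mem_compl, mem_support, not_not, Finset.mem_insert, Finset.mem_singleton]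
    refine ⟨fun hk => ?_, by rintro (rfl | rfl) <;> assumption⟩
    rcases h3 i j k hi hj hk with h | h | h
    · exact absurd h hij
    · exact .inl h.symm
    · exact .inr h.symm
  have h2 := card_compl_support_modEq_two hσ
  rw [hfix, Finset.card_pair hij, Nat.ModEq] at h2
  rcases hn with ⟨r, hr⟩
  omega

end Equiv.Perm

section PairSchur

variable {ι F : Type*} [Field F]

def finTwoEquivPair [DecidableEq ι] {p q : ι} (hpq : p ≠ q) : Fin 2 ≃ {x // x = p ∨ x = q} where
  toFun := ![⟨p, .inl rfl⟩, ⟨q, .inr rfl⟩]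
  invFun x := if x.1 = p then 0 else 1
  left_inv i := by fin_cases i <;> simp [hpq.symm]
  right_inv := by rintro ⟨x, rfl | rfl⟩ <;> simp [hpq.symm]

lemma card_compl_pair_add_two [Fintype ι] [DecidableEq ι] {p q : ι} (hpq : p ≠ q) :
    Fintype.card {x // ¬(x = p ∨ x = q)} + 2 = Fintype.card ι := by
  have h2 := (Fintype.card_congr (finTwoEquivPair hpq)).symm.trans (Fintype.card_fin 2)
  have := Fintype.card_subtype_le (fun x => x = p ∨ x = q)
  rw [Fintype.card_subtype_compl, h2]
  omega

def pairDet (B : Matrix ι ι F) (p q : ι) : F := B p p * B q q - B p q * B q p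

/-- The entries of `B_{·,P} (B_{P,P})⁻¹ B_{P,·}` for `P = {p, q}`, written with the adjugate of
the `2 × 2` block. -/
def pairCorrection (B : Matrix ι ι F) (p q : ι) : Matrix ι ι F :=
  of fun k l => (B k p * B q q * B p l - B k p * B p q * B q l - B k q * B q p * B p l +
    B k q * B p p * B q l) / pairDet B p q

def pairSchur (B : Matrix ι ι F) (p q : ι) :
    Matrix {x // ¬(x = p ∨ x = q)} {x // ¬(x = p ∨ x = q)} F :=
  (B - pairCorrection B p q).submatrix (↑) (↑)

@[simp] lemma pairSchur_apply (B : Matrix ι ι F) (p q : ι) (x y : {x // ¬(x = p ∨ x = q)}) :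
    pairSchur B p q x y = B x y - pairCorrection B p q x y := rfl

lemma pairCorrection_apply_of_isSymm {B : Matrix ι ι F} (hB : B.IsSymm) (p q k l : ι) :
    pairCorrection B p q k l = (B k p * B q q * B l p - B k p * B p q * B l q -
      B k q * B p q * B l p + B k q * B p p * B l q) * (pairDet B p q)⁻¹ := by
  rw [pairCorrection, of_apply, div_eq_mul_inv, hB.apply l p, hB.apply l q, hB.apply p q]

lemma isSymm_pairCorrection {B : Matrix ι ι F} (hB : B.IsSymm) (p q : ι) :
    (pairCorrection B p q).IsSymm :=
  IsSymm.ext fun k l => by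
    rw [pairCorrection_apply_of_isSymm hB, pairCorrection_apply_of_isSymm hB]
    ring

theorem det_eq_pairDet_mul_det_pairSchur [Fintype ι] [DecidableEq ι] (B : Matrix ι ι F)
    {p q : ι} (hpq : p ≠ q) (hd : pairDet B p q ≠ 0) :
    B.det = pairDet B p q * (pairSchur B p q).det := by
  let e := (Equiv.sumCongr (finTwoEquivPair hpq) (Equiv.refl _)).trans (Equiv.sumCompl _)
  have hA : toBlocks₁₁ (B.submatrix e e) = !![B p p, B p q; B q p, B q q] := by
    ext i j; fin_cases i <;> fin_cases j <;> rfl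
  have hdetA : (toBlocks₁₁ (B.submatrix e e)).det = pairDet B p q := by
    rw [hA, det_fin_two_of, pairDet]
  have := invertibleOfIsUnitDet _ (hdetA ▸ hd.isUnit)
  rw [← det_submatrix_equiv_self e B, ← fromBlocks_toBlocks (B.submatrix e e),
    det_fromBlocks₁₁, invOf_eq_nonsing_inv, hdetA]
  congr 2
  rw [hA, inv_def, adjugate_fin_two_of, det_fin_two_of]
  ext k l
  simp [pairCorrection, mul_apply, Fin.sum_univ_two, e, finTwoEquivPair, pairDet, toBlocks₁₂,
    toBlocks₂₁, toBlocks₂₂]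
  ring

end PairSchur

namespace LocalFieldData

variable {F : Type*} [Field F] (v : LocalFieldData F)

def val : AddValuation F (WithTop ℤ) :=
  AddValuation.of v.ord v.ord_zero v.ord_one v.ord_add v.ord_mul

@[simp] lemma val_apply (x : F) : v.val x = v.ord x := rfl

/-- `2 ord`: the bounds `ord(2 b_ij) ≥ (a_i + a_j)/2` have half-integral right-hand sides, so
they are stated for the doubled valuation. -/
def val2 : AddValuation F (WithTop ℤ) :=
  v.val.map (2 • AddMonoidHom.id _) (by simp [two_nsmul]) fun _ _ h => nsmul_le_nsmul_right h 2

lemma val2_apply (x : F) : v.val2 x = v.val x + v.val x := two_nsmul _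

lemma le_val_of_le_val2 {m : ℤ} {x : F} (h : ((2 * m : ℤ) : WithTop ℤ) ≤ v.val2 x) :
    (m : WithTop ℤ) ≤ v.val x := by
  rw [val2_apply] at h
  generalize v.val x = z at h ⊢
  induction z using WithTop.recTopCoe with
  | top => exact le_top
  | coe k => norm_cast at h ⊢; omega

lemma val2_eq_of_val_eq {x : F} {m : ℤ} (h : v.val x = m) :
    v.val2 x = ((2 * m : ℤ) : WithTop ℤ) := by
  rw [val2_apply, h]; norm_cast; ring

lemma ordZ_eq_of_val_eq {x : F} {m : ℤ} (h : v.val x = m) : v.ordZ x = m := by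
  rw [ordZ, ← val_apply, h]; rfl

lemma val_natCast_nonneg (n : ℕ) : 0 ≤ v.val (n : F) := by
  induction n with
  | zero => simp [v.val.map_zero]
  | succ n ih => rw [Nat.cast_succ]; exact v.val.map_le_add ih v.val.map_one.ge

lemma eq_zero_of_forall_le_val {x : F} (h : ∀ N : ℤ, (N : WithTop ℤ) ≤ v.val x) : x = 0 := by
  by_contra hx
  obtain ⟨m, hm⟩ := WithTop.ne_top_iff_exists.1 (v.val.ne_top_iff.2 hx)
  have := h (m + 1)
  rw [← hm] at this
  norm_cast at this
  omega

lemma pos_val_sub_of_pos_val_sq_sub (hdy : 0 < v.val 2) {α β : F} (hα : 0 ≤ v.val α)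
    (hβ : 0 ≤ v.val β) (h : 0 < v.val (α ^ 2 - β ^ 2)) : 0 < v.val (α - β) := by
  have hαβ : 0 ≤ v.val (α - β) := v.val.map_le_sub hα hβ
  have h2 : 0 < v.val (2 * β * (α - β)) := by
    rw [v.val.map_mul, v.val.map_mul]
    exact lt_add_of_lt_of_nonneg (lt_add_of_lt_of_nonneg hdy hβ) hαβ
  have hsq : 0 < v.val ((α - β) ^ 2) := by
    rw [show (α - β) ^ 2 = (α ^ 2 - β ^ 2) - 2 * β * (α - β) by ring]
    exact v.val.map_lt_sub h h2
  rw [v.val.map_pow] at hsq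
  by_contra! hle
  exact hsq.not_ge (nsmul_nonpos hle 2)

lemma pos_val_sub_of_pos_val_pow_two_pow_sub (hdy : 0 < v.val 2) (k : ℕ) {α β : F}
    (hα : 0 ≤ v.val α) (hβ : 0 ≤ v.val β)
    (h : 0 < v.val (α ^ 2 ^ k - β ^ 2 ^ k)) : 0 < v.val (α - β) := by
  induction k with
  | zero => simpa using h
  | succ k ih =>
    refine ih (v.pos_val_sub_of_pos_val_sq_sub hdy ?_ ?_ ?_)
    · rw [v.val.map_pow]; exact nsmul_nonneg hα _
    · rw [v.val.map_pow]; exact nsmul_nonneg hβ _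
    · simpa only [← pow_mul, ← pow_succ] using h

/-- Some `x ^ 2 ^ k` and `x ^ 2 ^ l` with `k < l` lie in the same residue class, and squaring is
injective on residues. -/
lemma exists_val_sub_sq_pos (hdy : 0 < v.val 2) {x : F} (hx : v.val x = 0) :
    ∃ t : F, v.val t = 0 ∧ 0 < v.val (x - t ^ 2) := by
  have hpow (k : ℕ) : v.val (x ^ k) = 0 := by rw [v.val.map_pow, hx, nsmul_zero]
  obtain ⟨S, hS⟩ := v.residue_finite
  choose g hgS hg using fun k : ℕ => hS (x ^ 2 ^ k) (hpow _).ge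
  obtain ⟨k, l, hkl, hgkl⟩ :=
    Set.Finite.exists_lt_map_eq_of_forall_mem (f := g) (fun k => hgS k) S.finite_toSet
  obtain ⟨d, rfl⟩ := Nat.exists_eq_add_of_lt hkl
  refine ⟨x ^ 2 ^ d, hpow _, ?_⟩
  have hkl' : 0 < v.val (x ^ 2 ^ k - (x ^ 2 ^ (d + 1)) ^ 2 ^ k) := by
    rw [← pow_mul, ← pow_add, show d + 1 + k = k + d + 1 by ring,
      show x ^ 2 ^ k - x ^ 2 ^ (k + d + 1) = (x ^ 2 ^ k - g k) - (x ^ 2 ^ (k + d + 1) - g k) by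
        ring]
    exact v.val.map_lt_sub (hg k) (hgkl ▸ hg _)
  have := v.pos_val_sub_of_pos_val_pow_two_pow_sub hdy k hx.ge (hpow _).ge hkl'
  rwa [pow_succ, pow_mul] at this

lemma exists_limit_of_le_val_succ_sub {z : ℕ → F}
    (h : ∀ k : ℕ, ((k + 1 : ℤ) : WithTop ℤ) ≤ v.val (z (k + 1) - z k)) :
    ∃ L : F, ∀ N : ℤ, ∃ M : ℕ, ∀ m ≥ M, (N : WithTop ℤ) ≤ v.val (z m - L) := by
  have hcauchy (k m : ℕ) (hkm : k ≤ m) : ((k + 1 : ℤ) : WithTop ℤ) ≤ v.val (z m - z k) := by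
    induction m, hkm using Nat.le_induction with
    | base => simp [v.val.map_zero]
    | succ m hkm ih =>
      rw [show z (m + 1) - z k = (z (m + 1) - z m) + (z m - z k) by ring]
      exact v.val.map_le_add ((WithTop.coe_le_coe.2 (by omega)).trans (h m)) ih
  refine v.complete z fun N => ⟨N.toNat, fun m hm k hk => ?_⟩
  rw [← val_apply]
  rcases le_total k m with hkm | hmk
  · exact (WithTop.coe_le_coe.2 (by omega)).trans (hcauchy k m hkm)
  · rw [v.val.map_sub_swap]
    exact (WithTop.coe_le_coe.2 (by omega)).trans (hcauchy m k hmk)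

/-- The iterates of `y ↦ u + c y²` from `0` converge: each step multiplies the difference of
consecutive iterates by `c (z_{k+1} + z_k)`, which lies in `𝔭`. -/
lemma exists_eq_add_mul_sq {u c : F} (hu : 0 < v.val u) (hc : 0 ≤ v.val c) :
    ∃ z : F, z = u + c * z ^ 2 := by
  set z : ℕ → F := fun k => (fun y => u + c * y ^ 2)^[k] 0
  have hzsucc (k : ℕ) : z (k + 1) = u + c * z k ^ 2 := Function.iterate_succ_apply' _ k 0
  have hz_pos (k : ℕ) : 0 < v.val (z k) := by
    induction k with
    | zero => simp [z, v.val.map_zero]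
    | succ k ih =>
      rw [hzsucc]
      refine v.val.map_lt_add hu ?_
      rw [v.val.map_mul, v.val.map_pow]
      exact (nsmul_pos ih two_ne_zero).trans_le (le_add_of_nonneg_left hc)
  have hstep (k : ℕ) : ((k + 1 : ℤ) : WithTop ℤ) ≤ v.val (z (k + 1) - z k) := by
    induction k with
    | zero => simpa [hzsucc, z] using WithTop.coe_add_one_le_of_lt hu
    | succ k ih =>
      rw [show z (k + 2) - z (k + 1) = c * (z (k + 1) + z k) * (z (k + 1) - z k) by
        rw [hzsucc (k + 1), hzsucc k]; ring]
      have hc0 : ((0 : ℤ) : WithTop ℤ) ≤ v.val c := by exact_mod_cast hc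
      exact v.val.coe_le_map_mul (v.val.coe_le_map_mul hc0
        (WithTop.coe_add_one_le_of_lt (v.val.map_lt_add (hz_pos (k + 1)) (hz_pos k))) le_rfl)
        ih (by omega)
  obtain ⟨L, hL⟩ := v.exists_limit_of_le_val_succ_sub hstep
  have hL_int : 0 ≤ v.val L := by
    obtain ⟨M, hM⟩ := hL 0
    simpa using v.val.map_le_sub (hz_pos M).le (hM M le_rfl)
  refine ⟨L, sub_eq_zero.1 (v.eq_zero_of_forall_le_val fun N => ?_)⟩
  obtain ⟨M, hM⟩ := hL N
  set m := max M N.toNat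
  have hunit : 0 ≤ v.val (1 - c * (L + z m)) :=
    v.val.map_le_sub v.val.map_one.ge
      (by rw [v.val.map_mul]; exact add_nonneg hc (v.val.map_le_add hL_int (hz_pos m).le))
  rw [show L - (u + c * L ^ 2) = (L - z m) * (1 - c * (L + z m)) + (z m - z (m + 1)) by
    rw [hzsucc]; ring]
  refine v.val.map_le_add ?_ ?_
  · rw [v.val.map_mul, v.val.map_sub_swap, ← add_zero (N : WithTop ℤ)]
    exact add_le_add (hM m (le_max_left _ _)) hunit
  · rw [v.val.map_sub_swap]
    exact (WithTop.coe_le_coe.2 (by omega)).trans (hstep m)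

def IsOneModFour (u : F) : Prop := ∃ c : F, 0 ≤ v.val c ∧ u = 1 + 4 * c

lemma isOneModFour_one : v.IsOneModFour 1 := ⟨0, by simp [v.val.map_zero], by ring⟩

variable {v}

lemma IsOneModFour.mul {u u' : F} (hu : v.IsOneModFour u) (hu' : v.IsOneModFour u') :
    v.IsOneModFour (u * u') := by
  obtain ⟨c, hc, rfl⟩ := hu
  obtain ⟨c', hc', rfl⟩ := hu'
  refine ⟨c + c' + 4 * c * c', v.val.map_le_add (v.val.map_le_add hc hc') ?_, by ring⟩
  rw [v.val.map_mul, v.val.map_mul]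
  exact add_nonneg (add_nonneg (by simpa using v.val_natCast_nonneg 4) hc) hc'

lemma IsOneModFour.val_eq_zero (hdy : 0 < v.val 2) {u : F} (hu : v.IsOneModFour u) :
    v.val u = 0 := by
  obtain ⟨c, hc, rfl⟩ := hu
  rw [v.val.map_add_eq_of_lt_left, v.val.map_one]
  rw [v.val.map_one, show (4 : F) = 2 * 2 by norm_num, v.val.map_mul, v.val.map_mul]
  exact (hdy.trans_le (le_add_of_nonneg_right hdy.le)).trans_le (le_add_of_nonneg_right hc)

/-- With `z = (x / t² - 1) + c z²`, one has `x = (t (2 + z) / 2)² - (1 + 4c) (t z / 2)²`. -/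
theorem IsOneModFour.exists_eq_sq_sub_mul_sq [CharZero F] (hdy : 0 < v.val 2) {u x : F}
    (hu : v.IsOneModFour u) (hx : v.val x = 0) : ∃ α β : F, x = α ^ 2 - u * β ^ 2 := by
  obtain ⟨c, hc, rfl⟩ := hu
  obtain ⟨t, ht, hxt⟩ := v.exists_val_sub_sq_pos hdy hx
  have ht0 : t ≠ 0 := v.val.ne_top_iff.1 (by rw [ht]; exact WithTop.zero_ne_top)
  have hu : 0 < v.val (x / t ^ 2 - 1) := by
    rwa [show x / t ^ 2 - 1 = (x - t ^ 2) / t ^ 2 by field_simp, v.val.map_div, v.val.map_pow,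
      ht, nsmul_zero, sub_zero]
  obtain ⟨z, hz⟩ := v.exists_eq_add_mul_sq hu hc
  have hz' : t ^ 2 * z = x - t ^ 2 + c * t ^ 2 * z ^ 2 := by
    linear_combination t ^ 2 * hz + div_mul_cancel₀ x (pow_ne_zero 2 ht0)
  refine ⟨t * (2 + z) / 2, t * z / 2, ?_⟩
  field_simp
  linear_combination (-4) * hz'

theorem xi_ne_zero_of_DB_eq [CharZero F] (hdy : 0 < v.val 2) {n : ℕ}
    {B : Matrix (Fin n) (Fin n) F} {m u : F} (hm : m ≠ 0) (hu : v.IsOneModFour u)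
    (h : DB B = m ^ 2 * u) : v.xi B ≠ 0 := by
  have hnorm (x : F) (hx : v.ord x = 0) : ∃ α β : F, x = α ^ 2 - DB B * β ^ 2 := by
    obtain ⟨α, β, hαβ⟩ := hu.exists_eq_sq_sub_mul_sq hdy hx
    exact ⟨α, β / m, by rw [hαβ, h]; field_simp⟩
  unfold xi
  split_ifs with h1 h2
  · exact one_ne_zero
  · exact neg_ne_zero.2 one_ne_zero
  · exact absurd ⟨h1, hnorm⟩ h2

theorem ordZ_emod_two_eq_of_eq {e : ℤ} (he : v.val 2 = e) {k : ℕ} {x m u d : F} {c : ℤ}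
    (hm : m ≠ 0) (hu : v.val u = 0) (hd : v.val d = c) (h : (-4) ^ k * x = m ^ 2 * u * d) :
    v.ordZ x % 2 = c % 2 := by
  obtain ⟨μ, hμ⟩ := WithTop.ne_top_iff_exists.1 (v.val.ne_top_iff.2 hm)
  have h' := congrArg v.val h
  rw [v.val.map_mul, v.val.map_mul, v.val.map_mul, v.val.map_pow, v.val.map_pow, v.val.map_neg,
    show (4 : F) = 2 * 2 by norm_num, v.val.map_mul, he, ← hμ, hu, add_zero, hd] at h'
  generalize hx : v.val x = z at h'
  induction z using WithTop.recTopCoe with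
  | top =>
    rw [WithTop.add_top, ← WithTop.coe_nsmul, ← WithTop.coe_add] at h'
    exact absurd h' WithTop.top_ne_coe
  | coe δ =>
    rw [v.ordZ_eq_of_val_eq hx]
    simp only [← WithTop.coe_add, ← WithTop.coe_nsmul, WithTop.coe_inj, nsmul_eq_mul,
      Nat.cast_ofNat] at h'
    rw [show δ = c + 2 * (μ - k * e) by linarith, Int.add_mul_emod_self_left]

variable (v) {ι : Type*}

/-- The conditions of a reduced form of GK-type `(a, σ)` that are inherited by Schur complements;
`σ` is only required to be an involution. -/
structure IsWeaklyReduced (B : Matrix ι ι F) (a : ι → ℤ) (σ : ι → ι) : Prop where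
  isSymm : B.IsSymm
  involutive : Function.Involutive σ
  le_val_diag : ∀ i, (a i : WithTop ℤ) ≤ v.val (B i i)
  val_diag_of_fixed : ∀ i, σ i = i → v.val (B i i) = a i
  val2_pair : ∀ i, σ i ≠ i → v.val2 (2 * B i (σ i)) = ((a i + a (σ i) : ℤ) : WithTop ℤ)
  val2_off : ∀ i j, j ≠ i → j ≠ σ i →
    ((a i + a j + 1 : ℤ) : WithTop ℤ) ≤ v.val2 (2 * B i j)

variable {v}

lemma IsReducedForm.isWeaklyReduced {n : ℕ} {B : Matrix (Fin n) (Fin n) F} {a : Fin n → ℤ}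
    {σ : Equiv.Perm (Fin n)} (hred : v.IsReducedForm B a σ) (hB : B.IsSymm)
    (hσ : Function.Involutive σ) : v.IsWeaklyReduced B a σ where
  isSymm := hB
  involutive := hσ
  le_val_diag := hred.1.1
  val_diag_of_fixed := hred.2.2.2.1
  val2_pair i hi := by rw [val2_apply]; exact hred.2.1 i hi
  val2_off i j hji hj := by
    rw [val2_apply]; exact WithTop.coe_add_one_le_of_lt (hred.2.2.2.2 i j hji hj)

namespace IsWeaklyReduced

variable {B : Matrix ι ι F} {a : ι → ℤ} {σ : ι → ι} {e : ℤ}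

lemma val2_off_unscaled (hB : v.IsWeaklyReduced B a σ) (he : v.val 2 = e) {i j : ι}
    (hji : j ≠ i) (hj : j ≠ σ i) :
    ((a i + a j + 1 - 2 * e : ℤ) : WithTop ℤ) ≤ v.val2 (B i j) := by
  have h := hB.val2_off i j hji hj
  rw [v.val2.map_mul, v.val2_eq_of_val_eq he] at h
  generalize v.val2 (B i j) = z at h ⊢
  induction z using WithTop.recTopCoe with
  | top => exact le_top
  | coe k => norm_cast at h ⊢; omega

lemma val2_pair_unscaled (hB : v.IsWeaklyReduced B a σ) (he : v.val 2 = e) {i : ι}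
    (hi : σ i ≠ i) : v.val2 (B i (σ i)) = ((a i + a (σ i) - 2 * e : ℤ) : WithTop ℤ) := by
  have h := hB.val2_pair i hi
  rw [v.val2.map_mul, v.val2_eq_of_val_eq he] at h
  generalize v.val2 (B i (σ i)) = z at h ⊢
  induction z using WithTop.recTopCoe with
  | top => rw [WithTop.add_top] at h; exact absurd h WithTop.top_ne_coe
  | coe k => norm_cast at h ⊢; omega

lemma le_val2_diag (hB : v.IsWeaklyReduced B a σ) (i : ι) :
    ((2 * a i : ℤ) : WithTop ℤ) ≤ v.val2 (B i i) := by
  rw [val2_apply, two_mul, WithTop.coe_add]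
  exact add_le_add (hB.le_val_diag i) (hB.le_val_diag i)

lemma ne_and_ne_of_mem_pair (hB : v.IsWeaklyReduced B a σ) {p k i : ι}
    (hk : ¬(k = p ∨ k = σ p)) (hi : i = p ∨ i = σ p) : i ≠ k ∧ i ≠ σ k := by
  refine ⟨fun h => hk (h ▸ hi), fun h => hk ?_⟩
  rw [hB.involutive.eq_iff.1 h.symm]
  rcases hi with rfl | rfl
  · exact .inr rfl
  · exact .inl (hB.involutive p)

lemma val2_off_pair (hB : v.IsWeaklyReduced B a σ) (he : v.val 2 = e) {p k i : ι}
    (hk : ¬(k = p ∨ k = σ p)) (hi : i = p ∨ i = σ p) :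
    ((a k + a i + 1 - 2 * e : ℤ) : WithTop ℤ) ≤ v.val2 (B k i) :=
  hB.val2_off_unscaled he (hB.ne_and_ne_of_mem_pair hk hi).1 (hB.ne_and_ne_of_mem_pair hk hi).2

lemma val2_pairDet (hB : v.IsWeaklyReduced B a σ) (he : v.val 2 = e) (he_pos : 0 < e) {p : ι}
    (hp : σ p ≠ p) :
    v.val2 (pairDet B p (σ p)) = ((2 * (a p + a (σ p) - 2 * e) : ℤ) : WithTop ℤ) := by
  have hpq : v.val2 (B p (σ p) * B (σ p) p) =
      ((2 * (a p + a (σ p) - 2 * e) : ℤ) : WithTop ℤ) := by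
    rw [hB.isSymm.apply p (σ p), v.val2.map_mul, hB.val2_pair_unscaled he hp, ← WithTop.coe_add]
    congr 1; ring
  rw [pairDet, v.val2.map_sub_eq_of_lt_right, hpq]
  rw [hpq]
  exact (WithTop.coe_lt_coe.2 (by omega)).trans_le
    (v.val2.coe_le_map_mul (hB.le_val2_diag p) (hB.le_val2_diag (σ p)) le_rfl)

lemma val2_pairDet_inv (hB : v.IsWeaklyReduced B a σ) (he : v.val 2 = e) (he_pos : 0 < e)
    {p : ι} (hp : σ p ≠ p) :
    v.val2 (pairDet B p (σ p))⁻¹ = ((-(2 * (a p + a (σ p) - 2 * e)) : ℤ) : WithTop ℤ) := by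
  rw [v.val2.map_inv, hB.val2_pairDet he he_pos hp]
  rfl

lemma le_val2_two_mul_pairCorrection (hB : v.IsWeaklyReduced B a σ) (he : v.val 2 = e)
    (he_pos : 0 < e) {p k l : ι} (hp : σ p ≠ p) (hk : ¬(k = p ∨ k = σ p))
    (hl : ¬(l = p ∨ l = σ p)) :
    ((a k + a l + 2 : ℤ) : WithTop ℤ) ≤ v.val2 (2 * pairCorrection B p (σ p) k l) := by
  have hpq := (hB.val2_pair_unscaled he hp).ge
  have hN : ((a k + a l + 2 * (a p + a (σ p)) + 2 - 6 * e : ℤ) : WithTop ℤ) ≤ v.val2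
      (B k p * B (σ p) (σ p) * B l p - B k p * B p (σ p) * B l (σ p) -
        B k (σ p) * B p (σ p) * B l p + B k (σ p) * B p p * B l (σ p)) := by
    refine v.val2.map_le_add (v.val2.map_le_sub (v.val2.map_le_sub ?_ ?_) ?_) ?_
    · exact v.val2.coe_le_map_mul (v.val2.coe_le_map_mul (hB.val2_off_pair he hk (.inl rfl))
        (hB.le_val2_diag _) le_rfl) (hB.val2_off_pair he hl (.inl rfl)) (by omega)
    · exact v.val2.coe_le_map_mul (v.val2.coe_le_map_mul (hB.val2_off_pair he hk (.inl rfl))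
        hpq le_rfl) (hB.val2_off_pair he hl (.inr rfl)) (by omega)
    · exact v.val2.coe_le_map_mul (v.val2.coe_le_map_mul (hB.val2_off_pair he hk (.inr rfl))
        hpq le_rfl) (hB.val2_off_pair he hl (.inl rfl)) (by omega)
    · exact v.val2.coe_le_map_mul (v.val2.coe_le_map_mul (hB.val2_off_pair he hk (.inr rfl))
        (hB.le_val2_diag _) le_rfl) (hB.val2_off_pair he hl (.inr rfl)) (by omega)
  rw [pairCorrection_apply_of_isSymm hB.isSymm, ← mul_assoc]
  exact v.val2.coe_le_map_mul (v.val2.coe_le_map_mul (v.val2_eq_of_val_eq he).ge hN le_rfl)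
    (hB.val2_pairDet_inv he he_pos hp).ge (by omega)

/-- On the diagonal the two cross terms combine to `2 b_{kp} b_{p,σp} b_{k,σp}`, and this factor
`2` is what gives the bound. -/
lemma le_val_pairCorrection_self (hB : v.IsWeaklyReduced B a σ) (he : v.val 2 = e)
    (he_pos : 0 < e) {p k : ι} (hp : σ p ≠ p) (hk : ¬(k = p ∨ k = σ p)) :
    ((a k + 1 : ℤ) : WithTop ℤ) ≤ v.val (pairCorrection B p (σ p) k k) := by
  have hN : ((2 * (a k + a p + a (σ p) + 1 - 2 * e) : ℤ) : WithTop ℤ) ≤ v.val2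
      (B k p * B (σ p) (σ p) * B k p - 2 * B k p * B p (σ p) * B k (σ p) +
        B k (σ p) * B p p * B k (σ p)) := by
    refine v.val2.map_le_add (v.val2.map_le_sub ?_ ?_) ?_
    · exact v.val2.coe_le_map_mul (v.val2.coe_le_map_mul (hB.val2_off_pair he hk (.inl rfl))
        (hB.le_val2_diag _) le_rfl) (hB.val2_off_pair he hk (.inl rfl)) (by omega)
    · have h2kp := hB.val2_off k p (hB.ne_and_ne_of_mem_pair hk (.inl rfl)).1
        (hB.ne_and_ne_of_mem_pair hk (.inl rfl)).2
      exact v.val2.coe_le_map_mul (v.val2.coe_le_map_mul h2kp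
        (hB.val2_pair_unscaled he hp).ge le_rfl) (hB.val2_off_pair he hk (.inr rfl)) (by omega)
    · exact v.val2.coe_le_map_mul (v.val2.coe_le_map_mul (hB.val2_off_pair he hk (.inr rfl))
        (hB.le_val2_diag _) le_rfl) (hB.val2_off_pair he hk (.inr rfl)) (by omega)
  rw [pairCorrection_apply_of_isSymm hB.isSymm,
    show B k p * B (σ p) (σ p) * B k p - B k p * B p (σ p) * B k (σ p) -
        B k (σ p) * B p (σ p) * B k p + B k (σ p) * B p p * B k (σ p) =
      B k p * B (σ p) (σ p) * B k p - 2 * B k p * B p (σ p) * B k (σ p) +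
        B k (σ p) * B p p * B k (σ p) by ring]
  exact v.le_val_of_le_val2
    (v.val2.coe_le_map_mul hN (hB.val2_pairDet_inv he he_pos hp).ge (by omega))

lemma mapsTo_compl_pair (hB : v.IsWeaklyReduced B a σ) (p x : ι) (hx : ¬(x = p ∨ x = σ p)) :
    ¬(σ x = p ∨ σ x = σ p) := by
  rw [hB.involutive.eq_iff, hB.involutive.injective.eq_iff]
  tauto

lemma isWeaklyReduced_pairSchur (hB : v.IsWeaklyReduced B a σ) (he : v.val 2 = e)
    (he_pos : 0 < e) {p : ι} (hp : σ p ≠ p) :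
    v.IsWeaklyReduced (pairSchur B p (σ p)) (fun x => a x)
      (Subtype.map σ (hB.mapsTo_compl_pair p)) where
  isSymm := (hB.isSymm.sub (isSymm_pairCorrection hB.isSymm _ _)).submatrix _
  involutive x := Subtype.ext (hB.involutive x)
  le_val_diag x := v.val.map_le_sub (hB.le_val_diag x)
    ((WithTop.coe_le_coe.2 (by omega)).trans (hB.le_val_pairCorrection_self he he_pos hp x.2))
  val_diag_of_fixed x hx := by
    have hx' : σ x = x := congrArg Subtype.val hx
    rw [pairSchur_apply, v.val.map_sub_eq_of_lt_left, hB.val_diag_of_fixed x hx']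
    rw [hB.val_diag_of_fixed x hx']
    exact (WithTop.coe_lt_coe.2 (lt_add_one _)).trans_le
      (hB.le_val_pairCorrection_self he he_pos hp x.2)
  val2_pair x hx := by
    have hx' : σ x ≠ x := fun h => hx (Subtype.ext h)
    rw [pairSchur_apply, Subtype.map_coe, mul_sub, v.val2.map_sub_eq_of_lt_left]
    · exact hB.val2_pair x hx'
    rw [hB.val2_pair x hx']
    exact (WithTop.coe_lt_coe.2 (by omega)).trans_le
      (hB.le_val2_two_mul_pairCorrection he he_pos hp x.2 (hB.mapsTo_compl_pair p x x.2))
  val2_off x y hyx hy := by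
    rw [pairSchur_apply, mul_sub]
    exact v.val2.map_le_sub
      (hB.val2_off x y (fun h => hyx (Subtype.ext h)) (fun h => hy (Subtype.ext h)))
      ((WithTop.coe_le_coe.2 (by omega)).trans
        (hB.le_val2_two_mul_pairCorrection he he_pos hp x.2 y.2))

lemma exists_neg_four_mul_pairDet (hB : v.IsWeaklyReduced B a σ) {p : ι} (hp : σ p ≠ p) :
    ∃ u, v.IsOneModFour u ∧ -4 * pairDet B p (σ p) = (2 * B p (σ p)) ^ 2 * u := by
  have hb : v.val ((2 * B p (σ p)) ^ 2) = ((a p + a (σ p) : ℤ) : WithTop ℤ) := by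
    rw [v.val.map_pow, two_nsmul, ← val2_apply, hB.val2_pair p hp]
  have hb0 : (2 * B p (σ p)) ^ 2 ≠ 0 := v.val.ne_top_iff.1 (hb ▸ WithTop.coe_ne_top)
  refine ⟨1 + 4 * (-(B p p * B (σ p) (σ p)) * ((2 * B p (σ p)) ^ 2)⁻¹), ⟨_, ?_, rfl⟩, ?_⟩
  · have hinv : v.val ((2 * B p (σ p)) ^ 2)⁻¹ = ((-(a p + a (σ p)) : ℤ) : WithTop ℤ) := by
      rw [v.val.map_inv, hb]; rfl
    have hnum : ((a p + a (σ p) : ℤ) : WithTop ℤ) ≤ v.val (-(B p p * B (σ p) (σ p))) := by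
      rw [v.val.map_neg]
      exact v.val.coe_le_map_mul (hB.le_val_diag p) (hB.le_val_diag (σ p)) le_rfl
    rw [← WithTop.coe_zero]
    exact v.val.coe_le_map_mul hnum hinv.ge (by omega)
  · rw [pairDet, hB.isSymm.apply p (σ p)]
    linear_combination (4 * (B p p * B (σ p) (σ p))) * mul_inv_cancel₀ hb0

lemma val_det_of_subsingleton [Fintype ι] [DecidableEq ι] [Subsingleton ι]
    (hB : v.IsWeaklyReduced B a σ) {i : ι} (hi : σ i = i) : v.val B.det = a i := by
  have : Unique ι := uniqueOfSubsingleton i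
  rw [det_unique, Subsingleton.elim default i]
  exact hB.val_diag_of_fixed i hi

theorem exists_neg_four_pow_mul_det_eq [Fintype ι] [DecidableEq ι]
    (hB : v.IsWeaklyReduced B a σ) (he : v.val 2 = e) (he_pos : 0 < e)
    (hfix : ∀ i j, σ i = i → σ j = j → i = j) :
    ∃ m u d : F, m ≠ 0 ∧ v.IsOneModFour u ∧
      (-4) ^ (Fintype.card ι / 2) * B.det = m ^ 2 * u * d ∧
      ((∀ i, σ i ≠ i) → d = 1) ∧ ∀ i, σ i = i → v.val d = a i := by
  induction hn : Fintype.card ι using Nat.strong_induction_on generalizing ι with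
  | _ n ih =>
  by_cases hpair : ∃ p, σ p ≠ p
  · obtain ⟨p, hp⟩ := hpair
    have hcard := card_compl_pair_add_two (Ne.symm hp)
    obtain ⟨m, u, d, hm, hu, hdet, hd1, hda⟩ := ih _ (by omega)
      (hB.isWeaklyReduced_pairSchur he he_pos hp)
      (fun x y hx hy => Subtype.ext (hfix x y (congrArg Subtype.val hx) (congrArg Subtype.val hy)))
      rfl
    obtain ⟨u₀, hu₀, h4⟩ := hB.exists_neg_four_mul_pairDet hp
    have hb : 2 * B p (σ p) ≠ 0 :=
      v.val2.ne_top_iff.1 (by rw [hB.val2_pair p hp]; exact WithTop.coe_ne_top)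
    have hd : pairDet B p (σ p) ≠ 0 :=
      v.val2.ne_top_iff.1 (by rw [hB.val2_pairDet he he_pos hp]; exact WithTop.coe_ne_top)
    refine ⟨2 * B p (σ p) * m, u₀ * u, d, mul_ne_zero hb hm, hu₀.mul hu, ?_,
      fun h => hd1 fun x hx => h x (congrArg Subtype.val hx),
      fun i hi => hda ⟨i, ?_⟩ (Subtype.ext hi)⟩
    · rw [det_eq_pairDet_mul_det_pairSchur B (Ne.symm hp) hd, ← hn, ← hcard,
        Nat.add_div_right _ two_pos, pow_succ]
      linear_combination ((-4) ^ (Fintype.card {x // ¬(x = p ∨ x = σ p)} / 2) *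
        (pairSchur B p (σ p)).det) * h4 + (2 * B p (σ p)) ^ 2 * u₀ * hdet
    · rintro (rfl | rfl)
      · exact hp hi
      · exact hp (by rw [← hi, hB.involutive])
  · push Not at hpair
    have : Subsingleton ι := ⟨fun i j => hfix i j (hpair i) (hpair j)⟩
    have hn2 : n / 2 = 0 := by
      have := Fintype.card_le_one_iff_subsingleton.2 this
      omega
    refine ⟨1, 1, B.det, one_ne_zero, v.isOneModFour_one, by simp [hn2], fun h => ?_,
      fun i hi => hB.val_det_of_subsingleton hi⟩
    have : IsEmpty ι := ⟨fun i => h i (hpair i)⟩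
    exact det_isEmpty

end IsWeaklyReduced

end LocalFieldData

theorem reducedForm_fixedPoint_parity_general {F : Type*} [Field F] [CharZero F] (v : LocalFieldData F) {n : ℕ}
    (hdy : 0 < v.ord 2)
    (B : Matrix (Fin n) (Fin n) F) (hB : v.IsHalfIntegral B)
    (a : Fin n → ℤ)
    (σ : Equiv.Perm (Fin n)) (hadm : Admissible a σ) (hred : v.IsReducedForm B a σ) :
    (Odd n → ∀ i₀ : Fin n, σ i₀ = i₀ → v.ordZ (B i₀ i₀) % 2 = v.ordZ B.det % 2) ∧
    (Even n → v.xi B = 0 →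
      ∀ k : ℤ, ∃ i₀ : Fin n, σ i₀ = i₀ ∧ v.ordZ (B i₀ i₀) % 2 = k % 2) := by
  obtain ⟨e, he⟩ := WithTop.ne_top_iff_exists.1 (v.val.ne_top_iff.2 (two_ne_zero (α := F)))
  have he_pos : 0 < e := by rw [← LocalFieldData.val_apply, ← he] at hdy; exact_mod_cast hdy
  have hW := hred.isWeaklyReduced hB.1 hadm.1
  have hdiag (i : Fin n) (hi : σ i = i) : v.ordZ (B i i) = a i :=
    v.ordZ_eq_of_val_eq (hW.val_diag_of_fixed i hi)
  refine ⟨fun hodd i₀ hi₀ => ?_, fun heven hxi k => ?_⟩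
  · obtain ⟨m, u, d, hm, hu, hdet, -, hd⟩ := hW.exists_neg_four_pow_mul_det_eq he.symm he_pos
      fun i j => σ.eq_of_fixed_of_odd_card hadm.1 hadm.2.1 (by simpa using hodd)
    rw [hdiag i₀ hi₀, v.ordZ_emod_two_eq_of_eq he.symm hm (hu.val_eq_zero hdy) (hd i₀ hi₀) hdet]
  · by_cases hfix : ∃ i, σ i = i
    · obtain ⟨i, hi⟩ := hfix
      obtain ⟨j, hj, hji⟩ := σ.exists_fixed_ne_of_even_card hadm.1 (by simpa using heven) hi
      have hparity := hadm.2.2.1 j i hj hi hji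
      by_cases hik : a i % 2 = k % 2
      · exact ⟨i, hi, by rw [hdiag i hi, hik]⟩
      · exact ⟨j, hj, by rw [hdiag j hj]; omega⟩
    · push Not at hfix
      obtain ⟨m, u, d, hm, hu, hdet, hd1, -⟩ :=
        hW.exists_neg_four_pow_mul_det_eq he.symm he_pos fun i _ hi => absurd hi (hfix i)
      rw [Fintype.card_fin, hd1 hfix, mul_one] at hdet
      exact absurd hxi (v.xi_ne_zero_of_DB_eq hdy hm hu hdet)

/-- **Proposition 1.1.** Assume `F` is dyadic and let `B` be a reduced form of GK-type
`(a, σ)`. (1) If `n` is odd and `i₀ ∈ 𝒫⁰(σ)`, then `ord(b_(i₀ i₀)) ≡ ord(det B) mod 2`.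
(2) If `n` is even and `ξ_B = 0`, then for every integer `k` there is `i₀ ∈ 𝒫⁰(σ)` with
`ord(b_(i₀ i₀)) ≡ k mod 2`. -/
theorem reducedForm_fixedPoint_parity {F : Type*} [Field F] [CharZero F] (v : LocalFieldData F) {n : ℕ}
    (hdy : 0 < v.ord 2)
    (B : Matrix (Fin n) (Fin n) F) (hB : v.IsHalfIntegral B) (hnd : B.det ≠ 0)
    (a : Fin n → ℤ) (ha0 : ∀ i, 0 ≤ a i) (hmono : ∀ i j : Fin n, i ≤ j → a i ≤ a j)
    (σ : Equiv.Perm (Fin n)) (hadm : Admissible a σ) (hred : v.IsReducedForm B a σ) :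
    (Odd n → ∀ i₀ : Fin n, σ i₀ = i₀ → v.ordZ (B i₀ i₀) % 2 = v.ordZ B.det % 2) ∧
    (Even n → v.xi B = 0 →
      ∀ k : ℤ, ∃ i₀ : Fin n, σ i₀ = i₀ ∧ v.ordZ (B i₀ i₀) % 2 = k % 2) :=
  reducedForm_fixedPoint_parity_general v hdy B hB a σ hadm hred

end
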